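/- arXiv:1609.01826 — 3 statements merged into one kernel-verified Lean document; each statement's English description precedes it below -/
import Mathlib

section
/- If N ≤ 2M, then for every (μ_R, μ_T) in the feasible region F with μ_R + μ_T ≥ 1 and 2μ_R + μ_T ≥ 5/3, the LP value satisfies τ_u(μ_R, μ_T) = (1/N)(1 − μ_R) = τ_l(μ_R). -/
open Finset

/-- The index set of integer points: `A = {(m,n) : m,n ∈ {0,1,2,3}, m + 3n ≥ 3}`. -/
def idxA : Finset (ℕ × ℕ) :=
  (Finset.range 4 ×ˢ Finset.range 4).filter (fun p => 3 ≤ p.1 + 3 * p.2)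

/-- The per-user DoF values `d_{mn}(M,N)` of the paper. For `m = 3` the value is
irrelevant (the objective coefficient is zero) and is set to `1`. -/
noncomputable def dof (M N : ℕ) (m n : ℕ) : ℝ :=
  let Mr : ℝ := M
  let Nr : ℝ := N
  let kminus : ℝ := min Mr Nr
  let kplus : ℝ := max Mr Nr
  let ξ : ℝ := ((⌈kminus / (kplus - kminus)⌉ : ℤ) : ℝ)
  match m, n with
  | 0, 1 => if M = N then kminus / 2
            else min (kminus / (2 - 1/ξ)) (kplus / (2 + 1/ξ))
  | 0, 2 => if Nr/Mr ≤ 2/3 then Nr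
            else if Nr/Mr ≤ 5/3 then 2*Mr/3
            else if Nr/Mr ≤ 5/2 then 2*Nr/5
            else Mr
  | 0, 3 => min Mr Nr
  | 1, 1 => if Nr/Mr ≤ 1 then 6*Nr/7
            else if Nr/Mr ≤ 9/7 then 6*Mr/7
            else if Nr/Mr ≤ 3 then 2*Nr/3
            else 2*Mr
  | 1, 2 => if Nr/Mr ≤ 1 then Nr
            else if Nr/Mr ≤ 3/2 then Mr
            else if Nr/Mr ≤ 3 then 2*Nr/3
            else 2*Mr
  | 1, 3 => min Nr (2*Mr)
  | 2, _ => min Nr (3*Mr)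
  | _, _ => 1

/-- The feasible cache-size region `F`. -/
def FeasRegion (muR muT : ℝ) : Prop :=
  0 ≤ muR ∧ muR ≤ 1 ∧ 0 ≤ muT ∧ muT ≤ 1 ∧ 1 ≤ muR + 3*muT

/-- The LP value `τ_u(μ_R, μ_T)`. -/
noncomputable def tauU (M N : ℕ) (muR muT : ℝ) : ℝ :=
  sInf {t : ℝ | ∃ β : ℕ × ℕ → ℝ,
    (∀ p ∈ idxA, 0 ≤ β p ∧ β p ≤ 1) ∧
    (∑ p ∈ idxA, β p) = 1 ∧
    (∑ p ∈ idxA, β p * (p.1 : ℝ) / 3) ≤ muR ∧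
    (∑ p ∈ idxA, β p * (p.2 : ℝ) / 3) ≤ muT ∧
    t = ∑ p ∈ idxA, β p * (1 - (p.1 : ℝ)/3) / dof M N p.1 p.2}

/-- The lower-bound function
`τ_l(μ_R) = max{ (1/N)(1−μ_R), max_{s∈{1,2,3}} (s/(3M))(1 − s μ_R) }`. -/
noncomputable def tauL (M N : ℕ) (muR : ℝ) : ℝ :=
  max ((1/(N:ℝ)) * (1 - muR))
    (max ((1/(3*(M:ℝ))) * (1 - muR))
      (max ((2/(3*(M:ℝ))) * (1 - 2*muR)) ((3/(3*(M:ℝ))) * (1 - 3*muR))))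


/-! With `N ≤ 2M` every DoF value `d_{mn}` on `A` lies in `(0, N]`, so the LP objective is at least
`Σ β_{mn} (1 - m/3) / N ≥ (1 - μ_R) / N`. This value is attained by mixing two of the points
`(1,3)`, `(2,1)`, `(3,0)`, which have DoF `N` or objective coefficient `0`: `(2,1)` with `(3,0)`
when `μ_R ≥ 2/3`, and `(1,3)` with `(2,1)` otherwise, using all of `μ_R`. These mixtures need
`μ_T ≥ 1 - μ_R` and `μ_T ≥ 5/3 - 2μ_R` respectively. Finally `μ_T ≤ 1` forces `μ_R ≥ 1/3`, and
then the remaining terms of `τ_l` do not exceed `(1 - μ_R) / N`. -/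

section

variable {M N : ℕ}

lemma min_div_two_sub_inv_pos_and_le {a b ξ : ℝ} (ha : 0 < a) (hb : 0 < b) (hξ : 1 ≤ ξ) :
    0 < min (a / (2 - 1 / ξ)) (b / (2 + 1 / ξ)) ∧ min (a / (2 - 1 / ξ)) (b / (2 + 1 / ξ)) ≤ a := by
  have hinv_pos : 0 < 1 / ξ := by positivity
  have hinv_le : 1 / ξ ≤ 1 := (div_le_one (by linarith)).mpr hξ
  refine ⟨lt_min (div_pos ha (by linarith)) (div_pos hb (by linarith)), ?_⟩
  calc min (a / (2 - 1 / ξ)) (b / (2 + 1 / ξ)) ≤ a / (2 - 1 / ξ) := min_le_left _ _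
    _ ≤ a / 1 := div_le_div_of_nonneg_left ha.le one_pos (by linarith)
    _ = a := div_one a

lemma dof_zero_one_pos_and_le (hM : 0 < M) (hN : 0 < N) :
    0 < dof M N 0 1 ∧ dof M N 0 1 ≤ N := by
  have hM' : (0 : ℝ) < M := by exact_mod_cast hM
  have hN' : (0 : ℝ) < N := by exact_mod_cast hN
  have hmin_pos : (0 : ℝ) < min (M : ℝ) N := lt_min hM' hN'
  simp only [dof]
  split_ifs with hMN
  · exact ⟨by positivity, by linarith [min_le_right (M : ℝ) N]⟩
  · have hgap : 0 < max (M : ℝ) N - min (M : ℝ) N :=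
      sub_pos.mpr (min_lt_max.mpr (by exact_mod_cast hMN))
    have hξ : (1 : ℝ) ≤ ((⌈min (M : ℝ) N / (max (M : ℝ) N - min (M : ℝ) N)⌉ : ℤ) : ℝ) := by
      exact_mod_cast Int.one_le_ceil_iff.mpr (div_pos hmin_pos hgap)
    obtain ⟨hpos, hle⟩ :=
      min_div_two_sub_inv_pos_and_le hmin_pos (lt_max_of_lt_left hM') hξ
    exact ⟨hpos, hle.trans (min_le_right _ _)⟩

lemma dof_pos_and_le (hM : 0 < M) (hN : 0 < N) (hNM : N ≤ 2 * M) :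
    ∀ p ∈ idxA, 0 < dof M N p.1 p.2 ∧ dof M N p.1 p.2 ≤ N := by
  have hM' : (0 : ℝ) < M := by exact_mod_cast hM
  have hN' : (1 : ℝ) ≤ N := by exact_mod_cast hN
  have hNM' : (N : ℝ) ≤ 2 * M := by exact_mod_cast hNM
  intro p hp
  fin_cases hp
  · exact dof_zero_one_pos_and_le hM hN
  -- the branches worth more than `N` (`M` when `N > 5M/2`, `2M` when `N > 3M`) contradict `N ≤ 2M`
  all_goals
    simp only [dof, div_le_iff₀ hM', lt_min_iff, min_le_iff]
    (try split_ifs) <;> refine ⟨?_, ?_⟩ <;> first | linarith | (constructor <;> linarith) | simp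

lemma sum_single_add_single_mul {ι R : Type*} [DecidableEq ι] [Semiring R] {s : Finset ι}
    {q r : ι} (hq : q ∈ s) (hr : r ∈ s) (a b : R) (g : ι → R) :
    ∑ p ∈ s, (Pi.single q a + Pi.single r b : ι → R) p * g p = a * g q + b * g r := by
  simp [add_mul, sum_add_distrib, Pi.single_apply, ite_mul, hq, hr]

lemma fst_le_three_of_mem_idxA {p : ℕ × ℕ} (hp : p ∈ idxA) : (p.1 : ℝ) ≤ 3 := by
  fin_cases hp <;> norm_num

lemma dof_one_three (hNM : N ≤ 2 * M) : dof M N 1 3 = N := by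
  simp only [dof]
  exact min_eq_left (by exact_mod_cast hNM)

lemma dof_two (hNM : N ≤ 3 * M) (n : ℕ) : dof M N 2 n = N := by
  simp only [dof]
  exact min_eq_left (by exact_mod_cast hNM)

def lpValues (M N : ℕ) (muR muT : ℝ) : Set ℝ :=
  {t : ℝ | ∃ β : ℕ × ℕ → ℝ,
    (∀ p ∈ idxA, 0 ≤ β p ∧ β p ≤ 1) ∧
    (∑ p ∈ idxA, β p) = 1 ∧
    (∑ p ∈ idxA, β p * (p.1 : ℝ) / 3) ≤ muR ∧
    (∑ p ∈ idxA, β p * (p.2 : ℝ) / 3) ≤ muT ∧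
    t = ∑ p ∈ idxA, β p * (1 - (p.1 : ℝ) / 3) / dof M N p.1 p.2}

lemma tauU_eq_sInf_lpValues (muR muT : ℝ) :
    tauU M N muR muT = sInf (lpValues M N muR muT) := rfl

lemma one_div_mul_one_sub_mem_lowerBounds_lpValues (hM : 0 < M) (hN : 0 < N) (hNM : N ≤ 2 * M)
    (muR muT : ℝ) : 1 / (N : ℝ) * (1 - muR) ∈ lowerBounds (lpValues M N muR muT) := by
  rintro t ⟨β, hβ, hβ_sum, hβR, -, rfl⟩
  have hN' : (0 : ℝ) < N := by exact_mod_cast hN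
  calc 1 / (N : ℝ) * (1 - muR)
      ≤ 1 / (N : ℝ) * (1 - ∑ p ∈ idxA, β p * (p.1 : ℝ) / 3) := by gcongr
    _ = ∑ p ∈ idxA, β p * (1 - (p.1 : ℝ) / 3) / N := by
      have hsplit : ∑ p ∈ idxA, β p * (1 - (p.1 : ℝ) / 3)
          = ∑ p ∈ idxA, β p - ∑ p ∈ idxA, β p * (p.1 : ℝ) / 3 := by
        rw [← sum_sub_distrib]
        exact sum_congr rfl fun p _ => by ring
      rw [← sum_div (f := fun p => β p * (1 - (p.1 : ℝ) / 3)), hsplit, hβ_sum]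
      ring
    _ ≤ ∑ p ∈ idxA, β p * (1 - (p.1 : ℝ) / 3) / dof M N p.1 p.2 := by
      refine sum_le_sum fun p hp => ?_
      obtain ⟨hd_pos, hd_le⟩ := dof_pos_and_le hM hN hNM p hp
      have hm := fst_le_three_of_mem_idxA hp
      exact div_le_div_of_nonneg_left (mul_nonneg (hβ p hp).1 (by linarith)) hd_pos hd_le

lemma objective_two_point_mem_lpValues {q r : ℕ × ℕ} (hq : q ∈ idxA) (hr : r ∈ idxA)
    {a b muR muT : ℝ} (ha : 0 ≤ a) (hb : 0 ≤ b) (hab : a + b = 1)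
    (hR : a * q.1 / 3 + b * r.1 / 3 ≤ muR) (hT : a * q.2 / 3 + b * r.2 / 3 ≤ muT) :
    a * (1 - q.1 / 3) / dof M N q.1 q.2 + b * (1 - r.1 / 3) / dof M N r.1 r.2 ∈
      lpValues M N muR muT := by
  set β : ℕ × ℕ → ℝ := Pi.single q a + Pi.single r b
  have hβ_nonneg : 0 ≤ β := add_nonneg (Pi.single_nonneg.mpr ha) (Pi.single_nonneg.mpr hb)
  have hβ_sum : ∑ p ∈ idxA, β p = 1 := by
    simpa [β, hab] using sum_single_add_single_mul hq hr a b (fun _ => (1 : ℝ))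
  refine ⟨β, fun p hp => ⟨hβ_nonneg p, ?_⟩, hβ_sum, ?_, ?_, ?_⟩
  · exact hβ_sum ▸ single_le_sum (fun p _ => hβ_nonneg p) hp
  all_goals simp only [mul_div_assoc, β, sum_single_add_single_mul hq hr]
  · linarith
  · linarith

lemma one_div_mul_one_sub_mem_lpValues (hNM : N ≤ 2 * M) {muR muT : ℝ} (hR : 1 / 3 ≤ muR)
    (hR1 : muR ≤ 1) (hsum : 1 ≤ muR + muT) (hsum2 : 5 / 3 ≤ 2 * muR + muT) :
    1 / (N : ℝ) * (1 - muR) ∈ lpValues M N muR muT := by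
  rcases le_or_gt (2 / 3) muR with hR23 | hR23
  · convert objective_two_point_mem_lpValues (M := M) (N := N) (muR := muR) (muT := muT)
      (q := (2, 1)) (r := (3, 0)) (by decide) (by decide)
      (a := 3 * (1 - muR)) (b := 3 * muR - 2) (by linarith) (by linarith) (by ring)
      (by norm_num; linarith) (by norm_num; linarith) using 1
    rw [dof_two (by omega)]
    ring
  · convert objective_two_point_mem_lpValues (M := M) (N := N) (muR := muR) (muT := muT)
      (q := (1, 3)) (r := (2, 1)) (by decide) (by decide)
      (a := 2 - 3 * muR) (b := 3 * muR - 1) (by linarith) (by linarith) (by ring)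
      (by norm_num; linarith) (by norm_num; linarith) using 1
    rw [dof_one_three hNM, dof_two (by omega)]
    ring

lemma tauL_eq_one_div_mul_one_sub (hM : 0 < M) (hN : 0 < N) (hNM : N ≤ 2 * M) {muR : ℝ}
    (hR : 1 / 3 ≤ muR) (hR1 : muR ≤ 1) : tauL M N muR = 1 / (N : ℝ) * (1 - muR) := by
  have hM' : (0 : ℝ) < M := by exact_mod_cast hM
  have hN' : (0 : ℝ) < N := by exact_mod_cast hN
  have hNM' : (N : ℝ) ≤ 2 * M := by exact_mod_cast hNM
  have hs1 : 1 / (3 * (M : ℝ)) * (1 - muR) ≤ 1 / (N : ℝ) * (1 - muR) := by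
    gcongr
    linarith
  have hs2 : 2 / (3 * (M : ℝ)) * (1 - 2 * muR) ≤ 1 / (N : ℝ) * (1 - muR) := by
    rw [div_mul_eq_mul_div, div_mul_eq_mul_div, div_le_div_iff₀ (by positivity) hN']
    nlinarith [mul_nonneg (by linarith : (0 : ℝ) ≤ 2 * M - N) (by linarith : (0 : ℝ) ≤ 1 - muR)]
  have hs3 : 3 / (3 * (M : ℝ)) * (1 - 3 * muR) ≤ 1 / (N : ℝ) * (1 - muR) := by
    have : 3 / (3 * (M : ℝ)) * (1 - 3 * muR) ≤ 0 :=
      mul_nonpos_of_nonneg_of_nonpos (by positivity) (by linarith)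
    have : 0 ≤ 1 / (N : ℝ) * (1 - muR) := mul_nonneg (by positivity) (by linarith)
    linarith
  exact max_eq_left (max_le hs1 (max_le hs2 hs3))

end

/-- If `N ≤ 2M`, then for every `(μ_R, μ_T)` in the feasible region with
`μ_R + μ_T ≥ 1` and `2μ_R + μ_T ≥ 5/3`, one has
`τ_u(μ_R, μ_T) = (1/N)(1 − μ_R) = τ_l(μ_R)`. -/
theorem tauU_eq_case_N_le_two_M (M N : ℕ) (hM : 0 < M) (hN : 0 < N)
    (hNM : N ≤ 2 * M)
    (muR muT : ℝ) (h : FeasRegion muR muT)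
    (hsum : 1 ≤ muR + muT) (hsum2 : 5/3 ≤ 2*muR + muT) :
    tauU M N muR muT = (1/(N:ℝ)) * (1 - muR) ∧
    tauU M N muR muT = tauL M N muR := by
  obtain ⟨-, hR1, -, hT1, -⟩ := h
  have hR : 1 / 3 ≤ muR := by linarith
  have hτ : tauU M N muR muT = 1 / (N : ℝ) * (1 - muR) :=
    (tauU_eq_sInf_lpValues muR muT).trans <| IsLeast.csInf_eq
      ⟨one_div_mul_one_sub_mem_lpValues hNM hR hR1 hsum hsum2,
        one_div_mul_one_sub_mem_lowerBounds_lpValues hM hN hNM muR muT⟩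
  exact ⟨hτ, hτ.trans (tauL_eq_one_div_mul_one_sub hM hN hNM hR hR1).symm⟩
end

section
/- For all positive integers M and N and every (μ_R, μ_T) in the feasible region F with μ_R ≥ 2/3 and μ_R + μ_T ≥ 1, the LP value satisfies τ_u(μ_R, μ_T) = (1 − μ_R)/min{N, 3M} = τ_l(μ_R). -/
open Finset

/-! Every DoF value `d_{mn}` is at most `min{N, 3M}`, so the cost of an allocation `β` is at
least `(Σ β_{mn} (1 - m/3)) / min{N, 3M} ≥ (1 - μ_R) / min{N, 3M}`. Equality holds for the
allocation putting weight `3(1 - μ_R)` on `(2,1)`, where `d_{21} = min{N, 3M}`, and `3μ_R - 2` on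
`(3,0)`, which costs nothing; it is feasible exactly when `2/3 ≤ μ_R ≤ 1` and `μ_R + μ_T ≥ 1`.
For `μ_R ≥ 1/2` the terms of `τ_l` with `s = 2, 3` are nonpositive, so `τ_l(μ_R)` is the same
value. -/

def IsLPFeasible (muR muT : ℝ) (β : ℕ × ℕ → ℝ) : Prop :=
  (∀ p ∈ idxA, 0 ≤ β p ∧ β p ≤ 1) ∧
    (∑ p ∈ idxA, β p) = 1 ∧
    (∑ p ∈ idxA, β p * (p.1 : ℝ) / 3) ≤ muR ∧
    (∑ p ∈ idxA, β p * (p.2 : ℝ) / 3) ≤ muT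

noncomputable def lpCost (M N : ℕ) (β : ℕ × ℕ → ℝ) : ℝ :=
  ∑ p ∈ idxA, β p * (1 - (p.1 : ℝ) / 3) / dof M N p.1 p.2

lemma tauU_eq_of_isLeast {M N : ℕ} {muR muT t : ℝ}
    (hmem : ∃ β, IsLPFeasible muR muT β ∧ lpCost M N β = t)
    (hle : ∀ β, IsLPFeasible muR muT β → t ≤ lpCost M N β) :
    tauU M N muR muT = t := by
  refine IsLeast.csInf_eq ⟨?_, ?_⟩
  · obtain ⟨β, ⟨h01, hsum, hR, hT⟩, rfl⟩ := hmem
    exact ⟨β, h01, hsum, hR, hT, rfl⟩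
  · rintro _ ⟨β, h01, hsum, hR, hT, rfl⟩
    exact hle β ⟨h01, hsum, hR, hT⟩

lemma mem_idxA {m n : ℕ} : (m, n) ∈ idxA ↔ m < 4 ∧ n < 4 ∧ 3 ≤ m + 3 * n := by
  simp [idxA, and_assoc]

lemma one_le_ceil_div_sub {a b : ℝ} (ha : 0 < a) (hab : a < b) :
    (1 : ℝ) ≤ ⌈a / (b - a)⌉ := by
  exact_mod_cast Int.ceil_pos.mpr (div_pos ha (sub_pos.mpr hab))

lemma min_div_two_sub_div_two_add_mem_Ioc {a b ξ : ℝ} (ha : 0 < a) (hab : a ≤ b) (hξ : 1 ≤ ξ) :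
    min (a / (2 - 1 / ξ)) (b / (2 + 1 / ξ)) ∈ Set.Ioc 0 a := by
  have hinv : 1 / ξ ≤ 1 := by rw [div_le_one (by linarith)]; exact hξ
  have hinv0 : 0 < 1 / ξ := by positivity
  exact ⟨lt_min (div_pos ha (by linarith)) (div_pos (by linarith) (by linarith)),
    (min_le_left _ _).trans (div_le_self ha.le (by linarith))⟩

lemma dof_zero_one_mem_Ioc {M N : ℕ} (hM : 0 < M) (hN : 0 < N) :
    dof M N 0 1 ∈ Set.Ioc 0 (min (M : ℝ) N) := by
  have hkmin : (0 : ℝ) < min (M : ℝ) N := lt_min (by exact_mod_cast hM) (by exact_mod_cast hN)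
  simp only [dof]
  split_ifs with hMN
  · exact ⟨half_pos hkmin, half_le_self hkmin.le⟩
  · have hlt : min (M : ℝ) N < max (M : ℝ) N := min_lt_max.mpr (by exact_mod_cast hMN)
    exact min_div_two_sub_div_two_add_mem_Ioc hkmin hlt.le (one_le_ceil_div_sub hkmin hlt)

lemma dof_mem_Ioc {M N m n : ℕ} (hM : 0 < M) (hN : 0 < N) (hp : (m, n) ∈ idxA) :
    dof M N m n ∈ Set.Ioc 0 (min (N : ℝ) (3 * M)) := by
  have hM0 : (0 : ℝ) < M := by exact_mod_cast hM
  have hM' : (1 : ℝ) ≤ M := by exact_mod_cast hM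
  have hN' : (1 : ℝ) ≤ N := by exact_mod_cast hN
  have hkmin : min (M : ℝ) N ≤ min (N : ℝ) (3 * M) :=
    le_min (min_le_right _ _) ((min_le_left _ _).trans (by linarith))
  obtain ⟨hm, hn, hmn⟩ := mem_idxA.mp hp
  interval_cases m <;> interval_cases n <;> try omega
  all_goals first
    | exact Set.Ioc_subset_Ioc_right hkmin (dof_zero_one_mem_Ioc hM hN)
    | simp only [dof, Set.mem_Ioc]
      first
        | exact ⟨lt_min (by linarith) (by linarith), hkmin⟩
        | exact ⟨lt_min (by linarith) (by linarith), min_le_min_left _ (by linarith)⟩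
        | exact ⟨by norm_num, le_min hN' (by linarith)⟩
        | split_ifs <;>
            simp only [div_le_iff₀ hM0, not_le] at * <;>
            exact ⟨by linarith, le_min (by linarith) (by linarith)⟩

lemma div_min_le_lpCost {M N : ℕ} {muR muT : ℝ} {β : ℕ × ℕ → ℝ} (hM : 0 < M) (hN : 0 < N)
    (hβ : IsLPFeasible muR muT β) :
    (1 - muR) / min (N : ℝ) (3 * M) ≤ lpCost M N β := by
  obtain ⟨h01, hsum, hR, -⟩ := hβ
  set k := min (N : ℝ) (3 * M)
  have hweight : ∑ p ∈ idxA, β p * (1 - (p.1 : ℝ) / 3) =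
      ∑ p ∈ idxA, β p - ∑ p ∈ idxA, β p * (p.1 : ℝ) / 3 := by
    rw [← Finset.sum_sub_distrib]
    exact Finset.sum_congr rfl fun p _ => by ring
  have hterm : ∀ p ∈ idxA,
      β p * (1 - (p.1 : ℝ) / 3) / k ≤ β p * (1 - (p.1 : ℝ) / 3) / dof M N p.1 p.2 := by
    intro p hp
    obtain ⟨hd0, hdk⟩ := dof_mem_Ioc hM hN hp
    have hm : (p.1 : ℝ) ≤ 3 := by exact_mod_cast Nat.le_of_lt_succ (mem_idxA.mp hp).1
    exact div_le_div_of_nonneg_left (mul_nonneg (h01 p hp).1 (by linarith)) hd0 hdk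
  calc (1 - muR) / k ≤ (∑ p ∈ idxA, β p * (1 - (p.1 : ℝ) / 3)) / k := by
        gcongr
        linarith
    _ = ∑ p ∈ idxA, β p * (1 - (p.1 : ℝ) / 3) / k := Finset.sum_div _ _ _
    _ ≤ lpCost M N β := Finset.sum_le_sum hterm

def alloc21And30 (a b : ℝ) : ℕ × ℕ → ℝ :=
  fun p => (if p = (2, 1) then a else 0) + (if p = (3, 0) then b else 0)

lemma sum_alloc21And30_mul_div (a b : ℝ) (f g : ℕ × ℕ → ℝ) :
    ∑ p ∈ idxA, alloc21And30 a b p * f p / g p =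
      a * f (2, 1) / g (2, 1) + b * f (3, 0) / g (3, 0) := by
  simp only [alloc21And30, add_mul, add_div, Finset.sum_add_distrib, ite_mul, zero_mul, ite_div,
    zero_div, Finset.sum_ite_eq']
  simp [idxA]

lemma isLPFeasible_alloc21And30 {muR muT a b : ℝ} (ha : a ∈ Set.Icc 0 1) (hb : b ∈ Set.Icc 0 1)
    (hab : a + b = 1) (hR : 2 * a / 3 + b ≤ muR) (hT : a / 3 ≤ muT) :
    IsLPFeasible muR muT (alloc21And30 a b) := by
  refine ⟨?_, ?_, ?_, ?_⟩
  · intro p _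
    simp only [alloc21And30]
    split_ifs <;> simp_all
  · simpa [hab] using sum_alloc21And30_mul_div a b 1 1
  · calc _ = 2 * a / 3 + b := by simpa [mul_comm] using sum_alloc21And30_mul_div a b (·.1) 3
      _ ≤ muR := hR
  · calc _ = a / 3 := by simpa using sum_alloc21And30_mul_div a b (·.2) 3
      _ ≤ muT := hT

lemma lpCost_alloc21And30 (M N : ℕ) (a b : ℝ) :
    lpCost M N (alloc21And30 a b) = a / 3 / min (N : ℝ) (3 * M) := by
  rw [lpCost, sum_alloc21And30_mul_div]
  simp only [dof]
  push_cast
  ring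

lemma tauL_eq_of_half_le {M N : ℕ} {muR : ℝ} (hM : 0 < M) (hN : 0 < N) (h1 : 1 / 2 ≤ muR)
    (h2 : muR ≤ 1) :
    tauL M N muR = (1 - muR) / min (N : ℝ) (3 * M) := by
  have hN0 : (0 : ℝ) < N := by exact_mod_cast hN
  have hM0 : (0 : ℝ) < 3 * M := by positivity
  have hmu : 0 ≤ 1 - muR := by linarith
  have hneg : max ((2 / (3 * (M : ℝ))) * (1 - 2 * muR)) ((3 / (3 * (M : ℝ))) * (1 - 3 * muR)) ≤ 0 :=
    max_le (mul_nonpos_of_nonneg_of_nonpos (by positivity) (by linarith))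
      (mul_nonpos_of_nonneg_of_nonpos (by positivity) (by linarith))
  rw [tauL, max_eq_left (hneg.trans (by positivity)), one_div_mul_eq_div, one_div_mul_eq_div]
  rcases le_total (N : ℝ) (3 * M) with h | h
  · rw [min_eq_left h, max_eq_left (div_le_div_of_nonneg_left hmu hN0 h)]
  · rw [min_eq_right h, max_eq_right (div_le_div_of_nonneg_left hmu hM0 h)]

/-- For all positive integers `M`, `N` and every `(μ_R, μ_T)` in the
feasible region with `μ_R ≥ 2/3` and `μ_R + μ_T ≥ 1`, one has
`τ_u(μ_R, μ_T) = (1 − μ_R)/min{N, 3M} = τ_l(μ_R)`. -/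
theorem tauU_eq_case_large_muR (M N : ℕ) (hM : 0 < M) (hN : 0 < N)
    (muR muT : ℝ) (h : FeasRegion muR muT)
    (hmuR : 2/3 ≤ muR) (hsum : 1 ≤ muR + muT) :
    tauU M N muR muT = (1 - muR) / min (N : ℝ) (3*(M:ℝ)) ∧
    tauU M N muR muT = tauL M N muR := by
  obtain ⟨-, hR1, -, -, -⟩ := h
  have htauU : tauU M N muR muT = (1 - muR) / min (N : ℝ) (3 * M) := by
    refine tauU_eq_of_isLeast ⟨alloc21And30 (3 * (1 - muR)) (3 * muR - 2), ?_, ?_⟩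
      fun β hβ => div_min_le_lpCost hM hN hβ
    · exact isLPFeasible_alloc21And30 ⟨by linarith, by linarith⟩ ⟨by linarith, by linarith⟩
        (by ring) (by linarith) (by linarith)
    · rw [lpCost_alloc21And30]
      ring
  exact ⟨htauU, htauU.trans (tauL_eq_of_half_le hM hN (by linarith) hR1).symm⟩
end

section
/- Let M = 3 and N = 5, and consider the LP value τ_u at the cache-size point (μ_R, μ_T) = (0, 2/3). Then the memory-sharing choice β_{01} = β_{03} = 1/2 (all other β_{mn} = 0) is feasible for the LP, gives objective value (1/2)·(1/d_{01}) + (1/2)·(1/d_{03}) = (1/2)(1/2) + (1/2)(1/3) = 5/12, and hence τ_u(0, 2/3) ≤ 5/12 < 1/2 = 1/d_{02}, where 1/d_{02} is the value obtained by the equal file splitting strategy at the integer point (0, 2/3). In particular, equal file splitting at integer points is not always optimal. -/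
open Finset

/-- The memory-sharing choice `β_{01} = β_{03} = 1/2`, all other `β_{mn} = 0`. -/
noncomputable def betaShare : ℕ × ℕ → ℝ :=
  fun p => if p = (0,1) ∨ p = (0,3) then 1/2 else 0

def LPFeasible (muR muT : ℝ) (β : ℕ × ℕ → ℝ) : Prop :=
  (∀ p ∈ idxA, 0 ≤ β p ∧ β p ≤ 1) ∧
    (∑ p ∈ idxA, β p) = 1 ∧
    (∑ p ∈ idxA, β p * (p.1 : ℝ) / 3) ≤ muR ∧
    (∑ p ∈ idxA, β p * (p.2 : ℝ) / 3) ≤ muT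

noncomputable def lpObjective (M N : ℕ) (β : ℕ × ℕ → ℝ) : ℝ :=
  ∑ p ∈ idxA, β p * (1 - (p.1 : ℝ) / 3) / dof M N p.1 p.2

lemma abs_one_div_intCast_le_one (z : ℤ) : |1 / (z : ℝ)| ≤ 1 := by
  rcases eq_or_ne z 0 with rfl | hz
  · simp
  rw [abs_div, abs_one, ← Int.cast_abs]
  exact div_le_one_of_le₀ (by exact_mod_cast Int.one_le_abs hz) (by positivity)

lemma dof_nonneg (M N m n : ℕ) : 0 ≤ dof M N m n := by
  unfold dof
  split <;> (try split_ifs) <;> first | positivity | dsimp only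
  have hξ := abs_le.mp <|
    abs_one_div_intCast_le_one ⌈min (M : ℝ) N / (max (M : ℝ) N - min (M : ℝ) N)⌉
  exact le_min (div_nonneg (by positivity) (by linarith))
    (div_nonneg (by positivity) (by linarith))

lemma lpObjective_nonneg (M N : ℕ) {β : ℕ × ℕ → ℝ} (hβ : ∀ p ∈ idxA, 0 ≤ β p) :
    0 ≤ lpObjective M N β := by
  refine Finset.sum_nonneg fun p hp => div_nonneg (mul_nonneg (hβ p hp) ?_) (dof_nonneg ..)
  have hp1 : p.1 ≤ 3 := by
    simp only [idxA, mem_filter, mem_product, mem_range] at hp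
    omega
  have : (p.1 : ℝ) ≤ 3 := by exact_mod_cast hp1
  linarith

lemma tauU_le_lpObjective (M N : ℕ) {muR muT : ℝ} {β : ℕ × ℕ → ℝ}
    (hβ : LPFeasible muR muT β) : tauU M N muR muT ≤ lpObjective M N β := by
  refine csInf_le ⟨0, ?_⟩ ⟨β, hβ.1, hβ.2.1, hβ.2.2.1, hβ.2.2.2, rfl⟩
  rintro t ⟨β', hβ', -, -, -, rfl⟩
  exact lpObjective_nonneg M N fun p hp => (hβ' p hp).1

lemma sum_betaShare_mul (f : ℕ × ℕ → ℝ) :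
    ∑ p ∈ idxA, betaShare p * f p = (f (0, 1) + f (0, 3)) / 2 := by
  rw [idxA, Finset.sum_filter]
  norm_num [Finset.sum_product, Finset.sum_range_succ, betaShare, Prod.ext_iff]
  ring

lemma betaShare_lpFeasible : LPFeasible 0 (2 / 3) betaShare := by
  refine ⟨fun p _ => ?_, ?_, ?_, ?_⟩
  · unfold betaShare; split_ifs <;> norm_num
  · simpa using sum_betaShare_mul fun _ => 1
  · simp_rw [mul_div_assoc, sum_betaShare_mul]; norm_num
  · simp_rw [mul_div_assoc, sum_betaShare_mul]; norm_num

lemma lpObjective_betaShare (M N : ℕ) :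
    lpObjective M N betaShare = 1 / 2 * (1 / dof M N 0 1) + 1 / 2 * (1 / dof M N 0 3) := by
  simp_rw [lpObjective, mul_div_assoc, sum_betaShare_mul]
  norm_num
  ring

lemma dof_three_five_zero_one : dof 3 5 0 1 = 2 := by
  norm_num [dof, show ⌈(3 : ℝ) / 2⌉ = 2 by norm_num [Int.ceil_eq_iff]]

lemma dof_three_five_zero_two : dof 3 5 0 2 = 2 := by norm_num [dof]

lemma dof_three_five_zero_three : dof 3 5 0 3 = 3 := by norm_num [dof]

/-- For `M = 3`, `N = 5` at the cache-size point `(μ_R, μ_T) = (0, 2/3)`,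
the memory-sharing choice `β_{01} = β_{03} = 1/2` is feasible for the LP, gives
objective value `(1/2)(1/d_{01}) + (1/2)(1/d_{03}) = 5/12`, hence
`τ_u(0, 2/3) ≤ 5/12 < 1/2 = 1/d_{02}`, the value of equal file splitting at `(0, 2/3)`.
In particular, equal file splitting at integer points is not always optimal. -/
theorem equal_splitting_not_optimal :
    ((∀ p ∈ idxA, 0 ≤ betaShare p ∧ betaShare p ≤ 1) ∧
     (∑ p ∈ idxA, betaShare p) = 1 ∧
     (∑ p ∈ idxA, betaShare p * (p.1 : ℝ) / 3) ≤ 0 ∧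
     (∑ p ∈ idxA, betaShare p * (p.2 : ℝ) / 3) ≤ 2/3 ∧
     (∑ p ∈ idxA, betaShare p * (1 - (p.1 : ℝ)/3) / dof 3 5 p.1 p.2)
       = (1/2) * (1/dof 3 5 0 1) + (1/2) * (1/dof 3 5 0 3)) ∧
    (1/2) * (1/dof 3 5 0 1) + (1/2) * (1/dof 3 5 0 3) = (5/12 : ℝ) ∧
    tauU 3 5 0 (2/3) ≤ 5/12 ∧
    (5/12 : ℝ) < 1/2 ∧
    1/dof 3 5 0 2 = (1/2 : ℝ) := by
  have hval : (1/2) * (1/dof 3 5 0 1) + (1/2) * (1/dof 3 5 0 3) = (5/12 : ℝ) := by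
    rw [dof_three_five_zero_one, dof_three_five_zero_three]; norm_num
  obtain ⟨hbounds, hsum, hR, hT⟩ := betaShare_lpFeasible
  refine ⟨⟨hbounds, hsum, hR, hT, lpObjective_betaShare 3 5⟩, hval, ?_, by norm_num,
    by rw [dof_three_five_zero_two]⟩
  calc tauU 3 5 0 (2/3) ≤ lpObjective 3 5 betaShare :=
        tauU_le_lpObjective 3 5 betaShare_lpFeasible
    _ = 5/12 := by rw [lpObjective_betaShare, hval]
end
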